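/- Let A be a real p×r matrix, let x_1, …, x_n ∈ ℝ^r and e_1, …, e_n ∈ ℝ^p, and set y_t = A x_t + e_t for t = 1, …, n. Fix 1 ≤ k₀ < n and define M̂ = Σ_{k=1}^{k₀} Σ̂_y(k) Σ̂_y(k)ᵀ. Then the sum of the eigenspaces of the symmetric nonnegative-definite matrix M̂ corresponding to eigenvalues strictly greater than Σ_{k=1}^{k₀} ‖Σ̂_e(k)‖² has dimension at most (k₀ + 1)·r; equivalently, counting multiplicities, at most (k₀+1)r eigenvalues of M̂ exceed Σ_{k=1}^{k₀} ‖Σ̂_e(k)‖². (This is the deterministic core of Theorem 2(iii): beyond the (k₀+1)r largest, the eigenvalues of M̂ are controlled purely by the sample autocovariances of the noise.) -/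

import Mathlib

open Matrix Finset

/-- Spectral norm of a real matrix: the operator norm of the induced linear map
between Euclidean spaces (the largest singular value). -/
noncomputable def specNorm {m n : ℕ} (G : Matrix (Fin m) (Fin n) ℝ) : ℝ :=
  ‖LinearMap.toContinuousLinearMap (Matrix.toEuclideanLin G)‖

/-- Sample mean of the observations `z 1, …, z n` (indexed `1,…,n`). -/
noncomputable def sampleMean {d : ℕ} (n : ℕ) (z : ℕ → Fin d → ℝ) : Fin d → ℝ :=
  (n : ℝ)⁻¹ • ∑ t ∈ Finset.Icc 1 n, z t

/-- Centered sample lag-`k` autocovariance matrix of the sequence `z 1,…,z n`: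
`Σ̂_z(k) = n⁻¹ ∑_{t=1}^{n−k} (z_{t+k} − z̄)(z_t − z̄)ᵀ`. -/
noncomputable def sampleAutoCov {d : ℕ} (n k : ℕ)
    (z : ℕ → Fin d → ℝ) : Matrix (Fin d) (Fin d) ℝ :=
  (n : ℝ)⁻¹ •
    ∑ t ∈ Finset.Icc 1 (n - k),
      vecMulVec (z (t + k) - sampleMean n z) (z t - sampleMean n z)

/-! Writing `y_t = A x_t + e_t`, the lag-`k` autocovariance splits as
`Σ̂_y(k) = A Σ̂_{x,y}(k) + Σ̂_{e,x}(k) Aᵀ + Σ̂_e(k)`, with cross-covariances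
`Σ̂_{z,w}(k) = n⁻¹ ∑_t (z_{t+k} − z̄)(w_t − w̄)ᵀ`. On the subspace `K` of vectors `v` with
`Aᵀ v = 0` and `Σ̂_{e,x}(k)ᵀ v = 0` for `1 ≤ k ≤ k₀`, whose codimension is at most `(k₀ + 1) r`,
this gives `Σ̂_y(k)ᵀ v = Σ̂_e(k)ᵀ v`, hence `vᵀ M̂ v = ∑_k ‖Σ̂_y(k)ᵀ v‖² ≤ c ‖v‖²` with
`c = ∑_k ‖Σ̂_e(k)‖²`. Eigenvectors of the symmetric matrix `M̂` for distinct eigenvalues are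
orthogonal, so `vᵀ M̂ v > c ‖v‖²` for every nonzero `v` in the sum of the eigenspaces for
eigenvalues above `c`. That sum therefore meets `K` only in `0`, and its dimension is at most the
codimension of `K`. -/

open scoped Matrix.Norms.L2Operator

theorem EuclideanSpace.norm_toLp_sq {n : Type*} [Fintype n] (v : n → ℝ) :
    ‖(WithLp.toLp 2 v : EuclideanSpace ℝ n)‖ ^ 2 = v ⬝ᵥ v := by
  rw [EuclideanSpace.real_norm_sq_eq]
  simp [dotProduct, sq]

theorem specNorm_eq_l2_opNorm {m n : ℕ} (G : Matrix (Fin m) (Fin n) ℝ) : specNorm G = ‖G‖ :=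
  rfl

theorem specNorm_transpose {m n : ℕ} (G : Matrix (Fin m) (Fin n) ℝ) :
    specNorm Gᵀ = specNorm G := by
  rw [specNorm_eq_l2_opNorm, specNorm_eq_l2_opNorm, ← conjTranspose_eq_transpose_of_trivial,
    l2_opNorm_conjTranspose]

theorem mulVec_dotProduct_mulVec_le_specNorm_sq {m n : ℕ} (G : Matrix (Fin m) (Fin n) ℝ)
    (v : Fin n → ℝ) : G *ᵥ v ⬝ᵥ G *ᵥ v ≤ specNorm G ^ 2 * (v ⬝ᵥ v) := by
  have h := l2_opNorm_mulVec G (WithLp.toLp 2 v)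
  rw [← EuclideanSpace.norm_toLp_sq, ← EuclideanSpace.norm_toLp_sq, ← mul_pow,
    specNorm_eq_l2_opNorm]
  exact pow_le_pow_left₀ (norm_nonneg _) h 2

namespace Matrix

theorem vecMulVec_mul_transpose {R l m n : Type*} [CommSemiring R] [Fintype m]
    (a : l → R) (b : m → R) (A : Matrix n m R) : vecMulVec a b * Aᵀ = vecMulVec a (A *ᵥ b) := by
  rw [vecMulVec_mul, vecMul_transpose]

variable {R n : Type*} [Fintype n]

theorem sum_dotProduct_sum_of_pairwise [NonUnitalNonAssocSemiring R] {ι : Type*}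
    (s : Finset ι) (a b : ι → n → R) (h : ∀ i ∈ s, ∀ j ∈ s, i ≠ j → a i ⬝ᵥ b j = 0) :
    (∑ i ∈ s, a i) ⬝ᵥ (∑ j ∈ s, b j) = ∑ i ∈ s, a i ⬝ᵥ b i := by
  simp_rw [sum_dotProduct, dotProduct_sum]
  exact Finset.sum_congr rfl fun i hi =>
    Finset.sum_eq_single_of_mem i hi fun j hj hji => h i hi j hj hji.symm

theorem dotProduct_mul_transpose_mulVec [CommSemiring R] {m : Type*} [Fintype m]
    (B : Matrix n m R) (v : n → R) : v ⬝ᵥ (B * Bᵀ) *ᵥ v = Bᵀ *ᵥ v ⬝ᵥ Bᵀ *ᵥ v := by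
  rw [← mulVec_mulVec, dotProduct_mulVec, mulVec_transpose]

variable {M : Matrix n n ℝ}

theorem IsSymm.dotProduct_eq_zero_of_ne (hM : M.IsSymm) {μ ν : ℝ} (hμν : μ ≠ ν)
    {a b : n → ℝ} (ha : M *ᵥ a = μ • a) (hb : M *ᵥ b = ν • b) : a ⬝ᵥ b = 0 := by
  have hab : μ * (a ⬝ᵥ b) = ν * (a ⬝ᵥ b) := by
    calc μ * (a ⬝ᵥ b) = M *ᵥ a ⬝ᵥ b := by rw [ha, smul_dotProduct, smul_eq_mul]
      _ = a ⬝ᵥ M *ᵥ b := by rw [← vecMul_transpose, hM.eq, dotProduct_mulVec]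
      _ = ν * (a ⬝ᵥ b) := by rw [hb, dotProduct_smul, smul_eq_mul]
  by_contra hab0
  exact hμν (mul_right_cancel₀ hab0 hab)

theorem IsSymm.mul_dotProduct_lt_of_mem_iSup_eigenspace (hM : M.IsSymm) {c : ℝ} {v : n → ℝ}
    (hv : v ∈ ⨆ μ ∈ {μ : ℝ | c < μ}, Module.End.eigenspace M.mulVecLin μ) (hv0 : v ≠ 0) :
    c * (v ⬝ᵥ v) < v ⬝ᵥ M *ᵥ v := by
  rw [iSup_subtype', Submodule.mem_iSup_iff_exists_finsupp] at hv
  obtain ⟨g, hg, rfl⟩ := hv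
  have heig (μ : {μ : ℝ // c < μ}) : M *ᵥ g μ = (μ : ℝ) • g μ :=
    Module.End.mem_eigenspace_iff.mp (hg μ)
  have horth : ∀ μ ∈ g.support, ∀ ν ∈ g.support, μ ≠ ν → g μ ⬝ᵥ g ν = 0 :=
    fun μ _ ν _ hμν => hM.dotProduct_eq_zero_of_ne (Subtype.coe_injective.ne hμν) (heig μ) (heig ν)
  have hnorm := sum_dotProduct_sum_of_pairwise _ _ _ horth
  have hquad := sum_dotProduct_sum_of_pairwise g.support g (fun μ => M *ᵥ g μ)
    fun μ hμ ν hν hμν => by rw [heig, dotProduct_smul, horth μ hμ ν hν hμν, smul_zero]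
  have hsupp : g.support.Nonempty := Finsupp.support_nonempty_iff.mpr (by rintro rfl; simp at hv0)
  rw [Finsupp.sum, mulVec_sum, hnorm, hquad, Finset.mul_sum, ← sub_pos, ← Finset.sum_sub_distrib]
  refine Finset.sum_pos (fun μ hμ => ?_) hsupp
  have hgμ : 0 < g μ ⬝ᵥ g μ := by
    simpa using dotProduct_star_self_pos_iff.mpr (Finsupp.mem_support_iff.mp hμ)
  rw [heig, dotProduct_smul, smul_eq_mul, ← sub_mul]
  exact mul_pos (sub_pos.mpr μ.2) hgμ

theorem IsSymm.disjoint_iSup_eigenspace_of_dotProduct_mulVec_le (hM : M.IsSymm) {c : ℝ}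
    {K : Submodule ℝ (n → ℝ)} (hK : ∀ v ∈ K, v ⬝ᵥ M *ᵥ v ≤ c * (v ⬝ᵥ v)) :
    Disjoint (⨆ μ ∈ {μ : ℝ | c < μ}, Module.End.eigenspace M.mulVecLin μ) K := by
  refine Submodule.disjoint_def.mpr fun v hvS hvK => ?_
  by_contra hv0
  exact (hK v hvK).not_gt (hM.mul_dotProduct_lt_of_mem_iSup_eigenspace hvS hv0)

end Matrix

noncomputable def sampleCrossCov {d d' : ℕ} (n k : ℕ) (z : ℕ → Fin d → ℝ)
    (w : ℕ → Fin d' → ℝ) : Matrix (Fin d) (Fin d') ℝ :=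
  (n : ℝ)⁻¹ • ∑ t ∈ Icc 1 (n - k), vecMulVec (z (t + k) - sampleMean n z) (w t - sampleMean n w)

section SampleCovariance

variable {d r : ℕ} (n k : ℕ) (A : Matrix (Fin d) (Fin r) ℝ) (x : ℕ → Fin r → ℝ)
  (e : ℕ → Fin d → ℝ)

theorem sampleCrossCov_self (z : ℕ → Fin d → ℝ) :
    sampleCrossCov n k z z = sampleAutoCov n k z :=
  rfl

theorem sampleMean_mulVec_add :
    sampleMean n (fun t => A *ᵥ x t + e t) = A *ᵥ sampleMean n x + sampleMean n e := by
  simp only [sampleMean, Finset.sum_add_distrib, ← mulVec_sum, mulVec_smul, smul_add]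

theorem mulVec_add_sub_sampleMean (t : ℕ) :
    A *ᵥ x t + e t - sampleMean n (fun t => A *ᵥ x t + e t)
      = A *ᵥ (x t - sampleMean n x) + (e t - sampleMean n e) := by
  rw [sampleMean_mulVec_add, mulVec_sub]
  abel

theorem sampleCrossCov_mulVec_add_left {d' : ℕ} (w : ℕ → Fin d' → ℝ) :
    sampleCrossCov n k (fun t => A *ᵥ x t + e t) w
      = A * sampleCrossCov n k x w + sampleCrossCov n k e w := by
  simp only [sampleCrossCov, mulVec_add_sub_sampleMean, add_vecMulVec, ← mul_vecMulVec,
    Finset.sum_add_distrib, ← Matrix.mul_sum, Matrix.mul_smul, smul_add]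

theorem sampleCrossCov_mulVec_add_right {d' : ℕ} (z : ℕ → Fin d' → ℝ) :
    sampleCrossCov n k z (fun t => A *ᵥ x t + e t)
      = sampleCrossCov n k z x * Aᵀ + sampleCrossCov n k z e := by
  simp only [sampleCrossCov, mulVec_add_sub_sampleMean, vecMulVec_add, ← vecMulVec_mul_transpose,
    Finset.sum_add_distrib, ← Matrix.sum_mul, Matrix.smul_mul, smul_add]

theorem sampleAutoCov_mulVec_add :
    sampleAutoCov n k (fun t => A *ᵥ x t + e t)
      = A * sampleCrossCov n k x (fun t => A *ᵥ x t + e t) + sampleCrossCov n k e x * Aᵀ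
        + sampleAutoCov n k e := by
  rw [← sampleCrossCov_self, sampleCrossCov_mulVec_add_left,
    sampleCrossCov_mulVec_add_right n k A x e e, add_assoc, sampleCrossCov_self]

theorem sampleAutoCov_transpose_mulVec_eq_of_mulVec_eq_zero {v : Fin d → ℝ}
    (hA : Aᵀ *ᵥ v = 0) (hex : (sampleCrossCov n k e x)ᵀ *ᵥ v = 0) :
    (sampleAutoCov n k (fun t => A *ᵥ x t + e t))ᵀ *ᵥ v = (sampleAutoCov n k e)ᵀ *ᵥ v := by
  simp only [sampleAutoCov_mulVec_add, transpose_add, transpose_mul, transpose_transpose,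
    add_mulVec, ← mulVec_mulVec, hA, hex, mulVec_zero, zero_add]

theorem dotProduct_sum_sampleAutoCov_mul_transpose_mulVec_le (s : Finset ℕ) {v : Fin d → ℝ}
    (hA : Aᵀ *ᵥ v = 0) (hex : ∀ k ∈ s, (sampleCrossCov n k e x)ᵀ *ᵥ v = 0) :
    v ⬝ᵥ (∑ k ∈ s, sampleAutoCov n k (fun t => A *ᵥ x t + e t)
        * (sampleAutoCov n k (fun t => A *ᵥ x t + e t))ᵀ) *ᵥ v
      ≤ (∑ k ∈ s, specNorm (sampleAutoCov n k e) ^ 2) * (v ⬝ᵥ v) := by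
  rw [sum_mulVec, dotProduct_sum, Finset.sum_mul]
  gcongr with k hk
  rw [dotProduct_mul_transpose_mulVec,
    sampleAutoCov_transpose_mulVec_eq_of_mulVec_eq_zero n k A x e hA (hex k hk),
    ← specNorm_transpose]
  exact mulVec_dotProduct_mulVec_le_specNorm_sq _ _

end SampleCovariance

theorem small_eigenvalues_controlled_by_noise_autocov_general
    {p r n : ℕ} (A : Matrix (Fin p) (Fin r) ℝ)
    (x : ℕ → Fin r → ℝ) (e : ℕ → Fin p → ℝ) (y : ℕ → Fin p → ℝ)
    (hy : ∀ t, y t = A.mulVec (x t) + e t)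
    (k₀ : ℕ)
    (Mhat : Matrix (Fin p) (Fin p) ℝ)
    (hMhat : Mhat = ∑ k ∈ Finset.Icc 1 k₀, sampleAutoCov n k y * (sampleAutoCov n k y)ᵀ) :
    Module.finrank ℝ
        ↥(⨆ μ ∈ {μ : ℝ | ∑ k ∈ Finset.Icc 1 k₀, specNorm (sampleAutoCov n k e) ^ 2 < μ},
            Module.End.eigenspace Mhat.mulVecLin μ)
      ≤ (k₀ + 1) * r := by
  obtain rfl : y = fun t => A *ᵥ x t + e t := funext hy
  have hsymm : Mhat.IsSymm := by
    rw [hMhat, IsSymm, transpose_sum]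
    exact Finset.sum_congr rfl fun k _ => isSymm_mul_transpose_self _
  let Φ : (Fin p → ℝ) →ₗ[ℝ] (Fin r → ℝ) × (Icc 1 k₀ → Fin r → ℝ) :=
    Aᵀ.mulVecLin.prod (LinearMap.pi fun k => (sampleCrossCov n k e x)ᵀ.mulVecLin)
  have hdisj := hsymm.disjoint_iSup_eigenspace_of_dotProduct_mulVec_le (K := LinearMap.ker Φ)
    fun v hv => by
      have hΦv : Φ v = 0 := hv
      rw [hMhat]
      exact dotProduct_sum_sampleAutoCov_mul_transpose_mulVec_le n A x e _ congr($hΦv.1)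
        fun k hk => congr($hΦv.2 ⟨k, hk⟩)
  calc _ ≤ Module.finrank ℝ ((Fin r → ℝ) × (Icc 1 k₀ → Fin r → ℝ)) :=
        LinearMap.finrank_le_finrank_of_injective (LinearMap.injective_domRestrict_iff.mpr hdisj)
    _ = (k₀ + 1) * r := by simp [Module.finrank_pi_fintype]; ring

/-- for `y_t = A x_t + e_t` and
`M̂ = ∑_{k=1}^{k₀} Σ̂_y(k) Σ̂_y(k)ᵀ`, the sum of the eigenspaces of `M̂` for
eigenvalues strictly greater than `∑_{k=1}^{k₀} ‖Σ̂_e(k)‖²` has dimension at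
most `(k₀ + 1) r`. -/
theorem small_eigenvalues_controlled_by_noise_autocov
    {p r n : ℕ} (A : Matrix (Fin p) (Fin r) ℝ)
    (x : ℕ → Fin r → ℝ) (e : ℕ → Fin p → ℝ) (y : ℕ → Fin p → ℝ)
    (hy : ∀ t, y t = A.mulVec (x t) + e t)
    (k₀ : ℕ) (hk₀ : 1 ≤ k₀) (hk₀n : k₀ < n)
    (Mhat : Matrix (Fin p) (Fin p) ℝ)
    (hMhat : Mhat = ∑ k ∈ Finset.Icc 1 k₀, sampleAutoCov n k y * (sampleAutoCov n k y)ᵀ) :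
    Module.finrank ℝ
        ↥(⨆ μ ∈ {μ : ℝ | ∑ k ∈ Finset.Icc 1 k₀, specNorm (sampleAutoCov n k e) ^ 2 < μ},
            Module.End.eigenspace Mhat.mulVecLin μ)
      ≤ (k₀ + 1) * r :=
  small_eigenvalues_controlled_by_noise_autocov_general A x e y hy k₀ Mhat hMhat
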